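/- Let (G,p) be a well-positioned framework in (ℝ^2,‖·‖_P) for a polytopic norm defined by two linearly independent vectors b_1,b_2, and suppose the monochrome subgraphs G_1 and G_2 are edge-disjoint spanning trees of G. Then (G,p) is minimally infinitesimally rigid: it is infinitesimally rigid, and for every edge e, the framework (G−e, p) has a non-constant infinitesimal flex. -/

import Mathlib

open Filter

/-- Euclidean dot product on `ℝ^d`. -/
def dotp {d : ℕ} (a b : Fin d → ℝ) : ℝ := ∑ i, a i * b i

/-- The polytopic norm `‖a‖_P = max_k |a · b_k|` determined by vectors `b₁,…,b_s`. -/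
noncomputable def pNorm {d s : ℕ} (b : Fin s → Fin d → ℝ) (a : Fin d → ℝ) : ℝ :=
  sSup {x : ℝ | ∃ k, x = |dotp (b k) a|}

/-- An infinitesimal flex of `(G,p)` with respect to the polytopic norm given by `b`. -/
def IsFlexP {d s n : ℕ} (b : Fin s → Fin d → ℝ) (G : SimpleGraph (Fin n))
    (p u : Fin n → Fin d → ℝ) : Prop :=
  ∀ i j, G.Adj i j →
    (fun t : ℝ => pNorm b ((p i + t • u i) - (p j + t • u j)) - pNorm b (p i - p j))
      =o[nhds (0 : ℝ)] (fun t : ℝ => t)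

/-- The monochrome subgraph of colour `k` induced by an edge colouring `col`. -/
def monochrome {s n : ℕ} (G : SimpleGraph (Fin n)) (col : Fin n → Fin n → Fin s)
    (k : Fin s) : SimpleGraph (Fin n) :=
  SimpleGraph.fromRel (fun i j => G.Adj i j ∧ col i j = k)

lemma pNorm_two (b : Fin 2 → Fin 2 → ℝ) (v : Fin 2 → ℝ) :
    pNorm b v = max |dotp (b 0) v| |dotp (b 1) v| := by
  have h : {x : ℝ | ∃ k, x = |dotp (b k) v|} = {|dotp (b 0) v|, |dotp (b 1) v|} := by
    ext x; simp [Fin.exists_fin_two, Set.mem_insert_iff]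
  rw [pNorm, h, csSup_pair]

lemma dotp_add (a v w : Fin 2 → ℝ) : dotp a (v + w) = dotp a v + dotp a w := by
  simp [dotp, mul_add, Finset.sum_add_distrib]

lemma dotp_smul (a v : Fin 2 → ℝ) (t : ℝ) : dotp a (t • v) = t * dotp a v := by
  simp [dotp, Finset.mul_sum]; ring_nf

lemma dotp_sub (a v w : Fin 2 → ℝ) : dotp a (v - w) = dotp a v - dotp a w := by
  simp [dotp, mul_sub, Finset.sum_sub_distrib]

lemma dotp_zero (a : Fin 2 → ℝ) : dotp a 0 = 0 := by simp [dotp]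

lemma littleo_id_iff (c : ℝ) :
    ((fun t : ℝ => c * t) =o[nhds 0] fun t : ℝ => t) ↔ c = 0 := by
  constructor
  · intro h
    by_contra hc
    have hc' : 0 < |c| / 2 := by positivity
    have h2 := h.def hc'
    rw [Metric.eventually_nhds_iff] at h2
    obtain ⟨δ, hδ, hb⟩ := h2
    have hy : dist (δ/2) (0:ℝ) < δ := by
      rw [Real.dist_eq]; rw [abs_of_pos (by linarith)]; linarith
    have := hb hy
    simp only [Real.norm_eq_abs, abs_mul] at this
    have habs : |δ/2| > 0 := by rw [abs_of_pos (by linarith)]; linarith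
    nlinarith [abs_pos.mpr hc]
  · rintro rfl
    simpa using (Asymptotics.isLittleO_zero (fun t : ℝ => t) (nhds 0))

lemma abs_max_littleo (A0 A1 B0 B1 : ℝ) (h : |A1| < |A0|) :
    ((fun t : ℝ => max |A0 + t*B0| |A1 + t*B1| - max |A0| |A1|) =o[nhds 0] fun t : ℝ => t)
      ↔ B0 = 0 := by
  set s : ℝ := if 0 ≤ A0 then 1 else -1 with hs
  have hsA : s * A0 = |A0| := by
    rcases le_or_gt 0 A0 with h0 | h0
    · simp [hs, h0, abs_of_nonneg h0]
    · simp [hs, not_le.mpr h0, abs_of_neg h0]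
  have hs1 : |s| = 1 := by
    rcases le_or_gt 0 A0 with h0 | h0
    · simp [hs, h0]
    · simp [hs, not_le.mpr h0]
  have hsne : s ≠ 0 := by intro h0; rw [h0] at hs1; simp at hs1
  set δ : ℝ := (|A0| - |A1|) / (|B0| + |B1| + 1) with hδdef
  have hδ : 0 < δ := by
    apply div_pos (by linarith) (by positivity)
  have heq : (fun t : ℝ => max |A0 + t*B0| |A1 + t*B1| - max |A0| |A1|)
      =ᶠ[nhds (0:ℝ)] (fun t : ℝ => (s * B0) * t) := by
    rw [Filter.eventuallyEq_iff_exists_mem]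
    refine ⟨Metric.ball 0 δ, Metric.ball_mem_nhds _ hδ, ?_⟩
    intro t ht
    simp only [Metric.mem_ball, Real.dist_eq, sub_zero] at ht
    have hkey : |t| * (|B0| + |B1| + 1) < |A0| - |A1| := by
      have h2 := (lt_div_iff₀ (by positivity : (0:ℝ) < |B0| + |B1| + 1)).mp ht
      linarith
    have htB0 : |t * B0| < |A0| - |A1| := by
      rw [abs_mul]
      nlinarith [abs_nonneg t, abs_nonneg B0, abs_nonneg B1, abs_nonneg A1]
    have habs0 : |A0 + t * B0| = |A0| + t * (s * B0) := by
      have h1 : 0 ≤ s * (A0 + t * B0) := by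
        have : s * (A0 + t*B0) = |A0| + s * (t * B0) := by rw [mul_add, hsA]
        rw [this]
        have : |s * (t * B0)| ≤ |t * B0| := by rw [abs_mul, hs1, one_mul]
        have h2 := abs_le.mp (le_of_lt (lt_of_le_of_lt this htB0))
        linarith [abs_nonneg A1]
      calc |A0 + t * B0| = |s * (A0 + t * B0)| := by rw [abs_mul, hs1, one_mul]
        _ = s * (A0 + t * B0) := abs_of_nonneg h1
        _ = |A0| + t * (s * B0) := by rw [mul_add, hsA]; ring
    have hmax : max |A0 + t*B0| |A1 + t*B1| = |A0 + t*B0| := by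
      apply max_eq_left
      calc |A1 + t*B1| ≤ |A1| + |t*B1| := abs_add_le _ _
        _ ≤ |A0| - |t*B0| := by
            rw [abs_mul, abs_mul]
            nlinarith [abs_nonneg t]
        _ ≤ |A0 + t*B0| := by
            have h3 := abs_sub_abs_le_abs_sub A0 (A0 + t*B0)
            have h4 : A0 - (A0 + t*B0) = -(t*B0) := by ring
            rw [h4, abs_neg] at h3
            linarith
    show max |A0 + t*B0| |A1 + t*B1| - max |A0| |A1| = (s * B0) * t
    rw [hmax, habs0, max_eq_left (le_of_lt h)]
    ring
  rw [Asymptotics.isLittleO_congr heq (Filter.EventuallyEq.refl _ _), littleo_id_iff]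
  constructor
  · intro h0; rcases mul_eq_zero.mp h0 with h1 | h1; exact absurd h1 hsne; exact h1
  · intro h0; rw [h0, mul_zero]

lemma flex_edge_iff (b : Fin 2 → Fin 2 → ℝ) (v w : Fin 2 → ℝ) (k0 : Fin 2)
    (hA : ∀ k, pNorm b v = |dotp (b k) v| ↔ k = k0) :
    ((fun t : ℝ => pNorm b (v + t • w) - pNorm b v) =o[nhds 0] fun t : ℝ => t)
      ↔ dotp (b k0) w = 0 := by
  have hlt : ∀ k, k ≠ k0 → |dotp (b k) v| < |dotp (b k0) v| := by
    intro k hk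
    have h1 : pNorm b v ≠ |dotp (b k) v| := fun h => hk ((hA k).mp h)
    have h0 : pNorm b v = |dotp (b k0) v| := (hA k0).mpr rfl
    have hle : |dotp (b k) v| ≤ pNorm b v := by
      rw [pNorm_two]
      fin_cases k
      · exact le_max_left _ _
      · exact le_max_right _ _
    rw [h0] at h1 hle
    exact lt_of_le_of_ne hle (fun h => h1 (h ▸ rfl))
  have hfun : ∀ t : ℝ, pNorm b (v + t • w) - pNorm b v
      = max |dotp (b 0) v + t * dotp (b 0) w| |dotp (b 1) v + t * dotp (b 1) w|
        - max |dotp (b 0) v| |dotp (b 1) v| := by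
    intro t
    rw [pNorm_two, pNorm_two, dotp_add, dotp_add, dotp_smul, dotp_smul]
  fin_cases k0
  · have hfe : (fun t : ℝ => pNorm b (v + t • w) - pNorm b v)
        = fun t : ℝ => max |dotp (b 0) v + t * dotp (b 0) w| |dotp (b 1) v + t * dotp (b 1) w|
          - max |dotp (b 0) v| |dotp (b 1) v| := funext hfun
    rw [hfe]
    exact abs_max_littleo _ _ _ _ (hlt 1 (by decide))
  · have hfe : (fun t : ℝ => pNorm b (v + t • w) - pNorm b v)
        = fun t : ℝ => max |dotp (b 1) v + t * dotp (b 1) w| |dotp (b 0) v + t * dotp (b 0) w|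
          - max |dotp (b 1) v| |dotp (b 0) v| := by
      funext t
      rw [hfun t, max_comm (|dotp (b 0) v + t * dotp (b 0) w|),
        max_comm (|dotp (b 0) v|)]
    rw [hfe]
    exact abs_max_littleo _ _ _ _ (hlt 0 (by decide))

lemma isFlexP_iff {n : ℕ} (b : Fin 2 → Fin 2 → ℝ) (G H : SimpleGraph (Fin n))
    (hle : H ≤ G) (p u : Fin n → Fin 2 → ℝ) (col : Fin n → Fin n → Fin 2)
    (hwp : ∀ i j, G.Adj i j →
      ∀ k, pNorm b (p i - p j) = |dotp (b k) (p i - p j)| ↔ k = col i j) :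
    IsFlexP b H p u ↔ ∀ i j, H.Adj i j → dotp (b (col i j)) (u i - u j) = 0 := by
  have key : ∀ i j, H.Adj i j →
      (((fun t : ℝ => pNorm b ((p i + t • u i) - (p j + t • u j)) - pNorm b (p i - p j))
        =o[nhds (0:ℝ)] fun t : ℝ => t) ↔ dotp (b (col i j)) (u i - u j) = 0) := by
    intro i j hij
    have harg : (fun t : ℝ => pNorm b ((p i + t • u i) - (p j + t • u j)) - pNorm b (p i - p j))
        = fun t : ℝ => pNorm b ((p i - p j) + t • (u i - u j)) - pNorm b (p i - p j) := by
      funext t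
      congr 2
      funext x
      simp only [Pi.add_apply, Pi.sub_apply, Pi.smul_apply, smul_eq_mul]
      ring
    rw [harg]
    exact flex_edge_iff b _ _ _ (hwp i j (hle hij))
  constructor
  · intro h i j hij; exact (key i j hij).mp (h i j hij)
  · intro h i j hij; exact (key i j hij).mpr (h i j hij)

lemma dotp_add_left (a a' v : Fin 2 → ℝ) : dotp (a + a') v = dotp a v + dotp a' v := by
  simp [dotp, add_mul, Finset.sum_add_distrib]

lemma dotp_smul_left (a v : Fin 2 → ℝ) (t : ℝ) : dotp (t • a) v = t * dotp a v := by
  simp [dotp, Finset.mul_sum]; ring_nf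

lemma dotp_basis_zero (b : Fin 2 → Fin 2 → ℝ) (hind : LinearIndependent ℝ b)
    (v : Fin 2 → ℝ) (h0 : dotp (b 0) v = 0) (h1 : dotp (b 1) v = 0) : v = 0 := by
  have hspan : Submodule.span ℝ (Set.range b) = ⊤ :=
    hind.span_eq_top_of_card_eq_finrank (by simp)
  have hall : ∀ a : Fin 2 → ℝ, dotp a v = 0 := by
    intro a
    have ha : a ∈ Submodule.span ℝ (Set.range b) := by rw [hspan]; trivial
    induction ha using Submodule.span_induction with
    | mem x hx =>
      obtain ⟨k, rfl⟩ := hx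
      fin_cases k
      · exact h0
      · exact h1
    | zero => simp [dotp]
    | add x y _ _ ihx ihy => rw [dotp_add_left, ihx, ihy, add_zero]
    | smul t x _ ihx => rw [dotp_smul_left, ihx, mul_zero]
  have hvv : dotp v v = 0 := hall v
  rw [dotp, Fin.sum_univ_two] at hvv
  funext x
  fin_cases x
  · show v 0 = 0; nlinarith [sq_nonneg (v 0), sq_nonneg (v 1)]
  · show v 1 = 0; nlinarith [sq_nonneg (v 0), sq_nonneg (v 1)]

lemma const_of_connected {n : ℕ} {H : SimpleGraph (Fin n)} (hconn : H.Connected)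
    {f : Fin n → ℝ} (h : ∀ i j, H.Adj i j → f i = f j) : ∀ i j, f i = f j := by
  intro i j
  obtain ⟨w⟩ := hconn i j
  induction w with
  | nil => rfl
  | cons hadj _ ih => exact (h _ _ hadj).trans ih

lemma dotp_neg (a v : Fin 2 → ℝ) : dotp a (-v) = -dotp a v := by
  simp [dotp, mul_neg]

lemma pNorm_neg (b : Fin 2 → Fin 2 → ℝ) (v : Fin 2 → ℝ) : pNorm b (-v) = pNorm b v := by
  rw [pNorm_two, pNorm_two, dotp_neg, dotp_neg, abs_neg, abs_neg]


/-- If both monochrome subgraphs of a well-positioned framework in `(ℝ², ‖·‖_P)`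
(with `b₁, b₂` linearly independent) are edge-disjoint spanning trees, then the
framework is minimally infinitesimally rigid: every infinitesimal flex is constant,
and deleting any edge produces a non-constant infinitesimal flex. -/
theorem spanning_trees_implies_min_rigid {n : ℕ}
    (b : Fin 2 → Fin 2 → ℝ) (hind : LinearIndependent ℝ b)
    (G : SimpleGraph (Fin n)) (p : Fin n → Fin 2 → ℝ) (col : Fin n → Fin n → Fin 2)
    (hwp : ∀ i j, G.Adj i j →
      ∀ k, pNorm b (p i - p j) = |dotp (b k) (p i - p j)| ↔ k = col i j)
    (htree : ∀ k : Fin 2, (monochrome G col k).IsTree) :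
    (∀ u, IsFlexP b G p u → ∃ a, ∀ i, u i = a) ∧
      (∀ i j, G.Adj i j →
        ∃ u, IsFlexP b (G.deleteEdges {s(i, j)}) p u ∧ ¬∃ a, ∀ i, u i = a) := by
  classical
  have hdich : ∀ c k : Fin 2, c ≠ k → c = k + 1 := by decide
  constructor
  · -- rigidity
    intro u hu
    rw [isFlexP_iff b G G le_rfl p u col hwp] at hu
    have hmono : ∀ k : Fin 2, ∀ i j, (monochrome G col k).Adj i j →
        dotp (b k) (u i) = dotp (b k) (u j) := by
      intro k i j hadj
      rw [monochrome, SimpleGraph.fromRel_adj] at hadj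
      obtain ⟨hne, h | h⟩ := hadj
      · have h2 := hu i j h.1
        rw [dotp_sub, ← h.2] at *
        linarith [hu i j h.1]
      · have h2 := hu j i h.1
        rw [dotp_sub] at h2
        rw [← h.2]
        linarith
    have hconst : ∀ k : Fin 2, ∀ i j, dotp (b k) (u i) = dotp (b k) (u j) :=
      fun k => const_of_connected (htree k).isConnected (hmono k)
    have hne : Nonempty (Fin n) := (htree 0).isConnected.nonempty
    obtain ⟨i0⟩ := hne
    refine ⟨u i0, fun i => ?_⟩
    have h0 : dotp (b 0) (u i - u i0) = 0 := by rw [dotp_sub, hconst 0 i i0, sub_self]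
    have h1 : dotp (b 1) (u i - u i0) = 0 := by rw [dotp_sub, hconst 1 i i0, sub_self]
    have := dotp_basis_zero b hind _ h0 h1
    rwa [sub_eq_zero] at this
  · -- flexibility after deleting an edge
    intro i j hij
    set k := col i j with hk
    set k' := k + 1 with hk'def
    set D := (monochrome G col k).deleteEdges {s(i, j)} with hD
    set w : Fin 2 → ℝ := ![-(b k' 1), b k' 0] with hwdef
    have hw0 : dotp (b k') w = 0 := by
      rw [dotp, Fin.sum_univ_two]
      simp [hwdef]
      ring
    have hwne : w ≠ 0 := by
      intro h
      apply hind.ne_zero k'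
      have h0 := congrFun h 0
      have h1 := congrFun h 1
      simp [hwdef] at h0 h1
      funext x
      fin_cases x
      · exact h1
      · exact h0
    set u : Fin n → Fin 2 → ℝ := fun v => if D.Reachable i v then w else 0 with hu
    refine ⟨u, ?_, ?_⟩
    · rw [isFlexP_iff b G _ (SimpleGraph.deleteEdges_le _) p u col hwp]
      intro x y hxy
      rw [SimpleGraph.deleteEdges_adj, Set.mem_singleton_iff] at hxy
      obtain ⟨hGxy, hexy⟩ := hxy
      by_cases hc : col x y = k
      · have hDxy : D.Adj x y := by
          rw [hD, SimpleGraph.deleteEdges_adj, Set.mem_singleton_iff]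
          refine ⟨?_, hexy⟩
          rw [monochrome, SimpleGraph.fromRel_adj]
          exact ⟨hGxy.ne, Or.inl ⟨hGxy, hc⟩⟩
        have hiff : D.Reachable i x ↔ D.Reachable i y :=
          ⟨fun h => h.trans hDxy.reachable, fun h => h.trans hDxy.symm.reachable⟩
        have huxy : u x = u y := by
          simp only [hu]
          rw [if_congr hiff rfl rfl]
        rw [huxy, sub_self, dotp_zero]
      · have hc' : col x y = k' := hdich _ _ hc
        rw [hc']
        have hz : ∀ z, dotp (b k') (u z) = 0 := by
          intro z
          simp only [hu]
          split
          · exact hw0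
          · exact dotp_zero _
        rw [dotp_sub, hz, hz, sub_zero]
    · -- non-constant
      have hui : u i = w := by
        simp only [hu]
        rw [if_pos (SimpleGraph.Reachable.refl i)]
      have hnr : ¬ D.Reachable i j := by
        intro hr
        obtain ⟨wk⟩ := hr
        have hDT : D ≤ monochrome G col k := SimpleGraph.deleteEdges_le _
        have hTadj : (monochrome G col k).Adj i j := by
          rw [monochrome, SimpleGraph.fromRel_adj]
          exact ⟨hij.ne, Or.inl ⟨hij, rfl⟩⟩
        have huniq := SimpleGraph.isAcyclic_iff_path_unique.mp (htree k).IsAcyclic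
          (SimpleGraph.Path.singleton hTadj) (wk.mapLe hDT).toPath
        have hmem : s(i, j) ∈ ((wk.mapLe hDT).toPath : (monochrome G col k).Walk i j).edges := by
          rw [← huniq]
          exact SimpleGraph.Path.mk'_mem_edges_singleton hTadj
        have hsub := SimpleGraph.Walk.edges_toPath_subset (wk.mapLe hDT) hmem
        have hwk : s(i, j) ∈ wk.edges := by
          simpa [SimpleGraph.Walk.mapLe, SimpleGraph.Walk.edges_map,
            SimpleGraph.Walk.edges_mapLe_eq_edges, Sym2.map_id'] using hsub
        have hE := SimpleGraph.Walk.edges_subset_edgeSet wk hwk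
        rw [hD, SimpleGraph.edgeSet_deleteEdges] at hE
        exact hE.2 rfl
      have huj : u j = 0 := by
        simp only [hu]
        rw [if_neg hnr]
      rintro ⟨a, ha⟩
      apply hwne
      rw [← hui, ha i, ← ha j, huj]
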